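/- Let R be a commutative local ring. If s ∈ R is nilpotent, then the generalized matrix ring K_s(R) is quasipolar. -/

import Mathlib

/-!
Reducing the diagonal modulo the maximal ideal `𝔪` is a ring homomorphism `K_s(R) → k × k`
(because `s ∈ 𝔪`), and it reflects units since `det_s` reduces to the product of the diagonal
residues. So it suffices to find an idempotent `p` in the double commutant of `A` whose image is
`1` where the diagonal residue of `A` vanishes and `0` where it does not: then `A + p` is a unit
and `A p` lies in the kernel, hence is quasinilpotent. When the two diagonal residues are both
zero or both nonzero, take `p = 1` or `p = 0`. Otherwise `A.a` and `A.d` are distinct simple roots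
of the characteristic polynomial `X² - tr A X + det_s A` modulo the nilpotent `s`, so Newton's
iteration lifts `A.d` to a root `β`; with the other root `γ = tr A - β`, Cayley–Hamilton gives
`(A - β)(A - γ) = 0`, and `(A - γ)/(β - γ)` (or its complement) is the required idempotent.
-/

/-- The generalized matrix ring `K_s(R)` with multiplier `s`. -/
@[ext]
structure GenMatrix (R : Type*) (s : R) where
  a : R
  b : R
  c : R
  d : R

namespace GenMatrix

variable {R : Type*} [Ring R] {s : R}

instance : Add (GenMatrix R s) :=
  ⟨fun X Y => ⟨X.a + Y.a, X.b + Y.b, X.c + Y.c, X.d + Y.d⟩⟩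
instance : Neg (GenMatrix R s) := ⟨fun X => ⟨-X.a, -X.b, -X.c, -X.d⟩⟩
instance : Zero (GenMatrix R s) := ⟨⟨0, 0, 0, 0⟩⟩
instance : One (GenMatrix R s) := ⟨⟨1, 0, 0, 1⟩⟩
instance : Mul (GenMatrix R s) :=
  ⟨fun X Y => ⟨X.a * Y.a + s * (X.b * Y.c), X.a * Y.b + X.b * Y.d,
    X.c * Y.a + X.d * Y.c, s * (X.c * Y.b) + X.d * Y.d⟩⟩

@[simp] lemma add_a (X Y : GenMatrix R s) : (X + Y).a = X.a + Y.a := rfl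
@[simp] lemma add_b (X Y : GenMatrix R s) : (X + Y).b = X.b + Y.b := rfl
@[simp] lemma add_c (X Y : GenMatrix R s) : (X + Y).c = X.c + Y.c := rfl
@[simp] lemma add_d (X Y : GenMatrix R s) : (X + Y).d = X.d + Y.d := rfl
@[simp] lemma neg_a (X : GenMatrix R s) : (-X).a = -X.a := rfl
@[simp] lemma neg_b (X : GenMatrix R s) : (-X).b = -X.b := rfl
@[simp] lemma neg_c (X : GenMatrix R s) : (-X).c = -X.c := rfl
@[simp] lemma neg_d (X : GenMatrix R s) : (-X).d = -X.d := rfl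
@[simp] lemma zero_a : (0 : GenMatrix R s).a = 0 := rfl
@[simp] lemma zero_b : (0 : GenMatrix R s).b = 0 := rfl
@[simp] lemma zero_c : (0 : GenMatrix R s).c = 0 := rfl
@[simp] lemma zero_d : (0 : GenMatrix R s).d = 0 := rfl
@[simp] lemma one_a : (1 : GenMatrix R s).a = 1 := rfl
@[simp] lemma one_b : (1 : GenMatrix R s).b = 0 := rfl
@[simp] lemma one_c : (1 : GenMatrix R s).c = 0 := rfl
@[simp] lemma one_d : (1 : GenMatrix R s).d = 1 := rfl
@[simp] lemma mul_a (X Y : GenMatrix R s) : (X * Y).a = X.a * Y.a + s * (X.b * Y.c) := rfl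
@[simp] lemma mul_b (X Y : GenMatrix R s) : (X * Y).b = X.a * Y.b + X.b * Y.d := rfl
@[simp] lemma mul_c (X Y : GenMatrix R s) : (X * Y).c = X.c * Y.a + X.d * Y.c := rfl
@[simp] lemma mul_d (X Y : GenMatrix R s) : (X * Y).d = s * (X.c * Y.b) + X.d * Y.d := rfl

instance : AddCommGroup (GenMatrix R s) where
  add_assoc X Y Z := by ext <;> simp [add_assoc]
  zero_add X := by ext <;> simp
  add_zero X := by ext <;> simp
  add_comm X Y := by ext <;> simp [add_comm]
  neg_add_cancel X := by ext <;> simp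
  nsmul := nsmulRec
  zsmul := zsmulRec

section Central

variable [Fact (s ∈ Set.center R)]

lemma scomm (r : R) : r * s = s * r := Semigroup.mem_center_iff.mp Fact.out r

lemma sshift (r t : R) : r * (s * t) = s * (r * t) := by
  rw [← mul_assoc, scomm (s := s), mul_assoc]

instance : Ring (GenMatrix R s) where
  __ := (inferInstance : AddCommGroup (GenMatrix R s))
  left_distrib X Y Z := by ext <;> simp [mul_add, add_mul] <;> abel
  right_distrib X Y Z := by ext <;> simp [mul_add, add_mul] <;> abel
  zero_mul X := by ext <;> simp
  mul_zero X := by ext <;> simp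
  mul_assoc X Y Z := by
    ext <;> simp only [mul_a, mul_b, mul_c, mul_d, mul_add, add_mul, mul_assoc, sshift] <;> abel
  one_mul X := by ext <;> simp
  mul_one X := by ext <;> simp

end Central

instance central_of_comm {R : Type*} [CommRing R] (s : R) : Fact (s ∈ Set.center R) :=
  ⟨by rw [Set.center_eq_univ]; trivial⟩

/-- `det_s` of a generalized matrix over a commutative ring. -/
def dets {R : Type*} {s : R} [CommRing R] (A : GenMatrix R s) : R :=
  A.a * A.d - s * (A.b * A.c)

/-- The trace of a generalized matrix. -/
def tr {R : Type*} {s : R} [Ring R] (A : GenMatrix R s) : R := A.a + A.d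

end GenMatrix

/-- An element `a` is quasinilpotent if `1 + a*x` is a unit for every `x` commuting with `a`. -/
def IsQuasinilpotent {R : Type*} [Ring R] (a : R) : Prop :=
  ∀ x : R, a * x = x * a → IsUnit (1 + a * x)

/-- An element `a` is quasipolar if there is an idempotent `p` in the double commutant of `a`
with `a + p` a unit and `a * p` quasinilpotent. -/
def IsQuasipolar {R : Type*} [Ring R] (a : R) : Prop :=
  ∃ p : R, IsIdempotentElem p ∧ (∀ y : R, y * a = a * y → p * y = y * p) ∧
    IsUnit (a + p) ∧ IsQuasinilpotent (a * p)

/-- A ring is quasipolar if every element is quasipolar. -/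
def IsQuasipolarRing (R : Type*) [Ring R] : Prop := ∀ a : R, IsQuasipolar a

/-- An element is strongly clean if it is the sum of an idempotent and a unit that commute. -/
def IsStronglyClean {R : Type*} [Ring R] (a : R) : Prop :=
  ∃ e u : R, IsIdempotentElem e ∧ IsUnit u ∧ a = e + u ∧ e * u = u * e

/-- A ring is strongly clean if every element is strongly clean. -/
def IsStronglyCleanRing (R : Type*) [Ring R] : Prop := ∀ a : R, IsStronglyClean a

/-- `a` is similar to `b` if `b = u⁻¹ * a * u` for some unit `u`. -/
def IsSimilar {R : Type*} [Ring R] (a b : R) : Prop :=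
  ∃ u : Rˣ, b = ↑u⁻¹ * a * ↑u

/-- The Jacobson radical of a ring: the intersection of all maximal left ideals. -/
def JacobsonRadical (R : Type*) [Ring R] : Ideal R := Ideal.jacobson ⊥

theorem isQuasinilpotent_of_map_eq_zero {S T : Type*} [Ring S] [Ring T] (f : S →+* T)
    [IsLocalHom f] {a : S} (ha : f a = 0) : IsQuasinilpotent a :=
  fun x _ => isUnit_of_map_unit f _ (by simp [ha])

theorem isQuasipolar_of_isLocalHom {S T : Type*} [Ring S] [Ring T] (f : S →+* T) [IsLocalHom f]
    {a p : S} (hp : IsIdempotentElem p) (hcomm : p ∈ Set.centralizer (Set.centralizer {a}))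
    (hunit : IsUnit (f (a + p))) (hzero : f (a * p) = 0) : IsQuasipolar a :=
  ⟨p, hp, fun y hy => (hcomm y (by simpa [Set.mem_centralizer_iff] using hy.symm)).symm,
    isUnit_of_map_unit f _ hunit, isQuasinilpotent_of_map_eq_zero f hzero⟩

section Algebra

variable {R S : Type*} [CommRing R] [Ring S] [Algebra R S]

theorem isIdempotentElem_smul_sub_algebraMap {a : S} {β γ u : R}
    (hroots : (a - algebraMap R S β) * (a - algebraMap R S γ) = 0) (hu : u * (β - γ) = 1) :
    IsIdempotentElem (u • (a - algebraMap R S γ)) := by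
  set x := a - algebraMap R S γ
  have hsq : x * x = (β - γ) • x :=
    calc x * x = (a - algebraMap R S β) * x + algebraMap R S (β - γ) * x := by
            rw [← add_mul, map_sub, sub_add_sub_cancel]
      _ = (β - γ) • x := by rw [hroots, zero_add, Algebra.smul_def]
  rw [IsIdempotentElem, smul_mul_smul_comm, hsq, smul_smul, mul_assoc, hu, mul_one]

theorem smul_sub_algebraMap_mem_centralizer_centralizer (a : S) (u γ : R) :
    u • (a - algebraMap R S γ) ∈ Set.centralizer (Set.centralizer {a}) := by
  rw [← Subalgebra.coe_centralizer R]
  have ha : a ∈ Set.centralizer (Set.centralizer {a}) :=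
    Set.subset_centralizer_centralizer (Set.mem_singleton a)
  exact Subalgebra.smul_mem _ (sub_mem ha (Subalgebra.algebraMap_mem _ γ)) u

end Algebra

namespace GenMatrix

variable {R : Type*} [CommRing R] {s : R}

def scalar : R →+* GenMatrix R s where
  toFun r := ⟨r, 0, 0, r⟩
  map_one' := rfl
  map_mul' _ _ := by ext <;> simp
  map_zero' := rfl
  map_add' _ _ := by ext <;> simp

instance : Algebra R (GenMatrix R s) :=
  scalar.toAlgebra' fun _ _ => by ext <;> simp [scalar] <;> ring

@[simp] lemma algebraMap_a (r : R) : (algebraMap R (GenMatrix R s) r).a = r := rfl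
@[simp] lemma algebraMap_b (r : R) : (algebraMap R (GenMatrix R s) r).b = 0 := rfl
@[simp] lemma algebraMap_c (r : R) : (algebraMap R (GenMatrix R s) r).c = 0 := rfl
@[simp] lemma algebraMap_d (r : R) : (algebraMap R (GenMatrix R s) r).d = r := rfl

@[simp] lemma sub_a (X Y : GenMatrix R s) : (X - Y).a = X.a - Y.a := (sub_eq_add_neg _ _).symm
@[simp] lemma sub_d (X Y : GenMatrix R s) : (X - Y).d = X.d - Y.d := (sub_eq_add_neg _ _).symm
@[simp] lemma smul_a (r : R) (X : GenMatrix R s) : (r • X).a = r * X.a := by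
  simp [Algebra.smul_def]
@[simp] lemma smul_d (r : R) (X : GenMatrix R s) : (r • X).d = r * X.d := by
  simp [Algebra.smul_def]

/-- Cayley–Hamilton, with the characteristic polynomial split as `(X - β)(X - (tr A - β))`. -/
theorem mul_sub_algebraMap_eq_zero (A : GenMatrix R s) {β : R}
    (hβ : β ^ 2 - tr A * β + dets A = 0) :
    (A - algebraMap R _ β) * (A - algebraMap R _ (tr A - β)) = 0 := by
  simp only [tr, dets] at hβ
  ext <;> simp only [tr, sub_eq_add_neg, mul_a, mul_b, mul_c, mul_d, add_a, add_b, add_c, add_d,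
    neg_a, neg_b, neg_c, neg_d, zero_a, zero_b, zero_c, zero_d, algebraMap_a, algebraMap_b,
    algebraMap_c, algebraMap_d]
  · linear_combination -hβ
  · ring
  · ring
  · linear_combination -hβ

theorem isUnit_of_isUnit_dets {A : GenMatrix R s} (h : IsUnit (dets A)) : IsUnit A := by
  obtain ⟨w, hw⟩ := h.exists_right_inv
  simp only [dets] at hw
  refine ⟨⟨A, ⟨w * A.d, -(w * A.b), -(w * A.c), w * A.a⟩, ?_, ?_⟩, rfl⟩ <;>
    ext <;> simp <;> first | ring1 | linear_combination hw

open Polynomial in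
theorem exists_isNilpotent_sub_and_charpoly_eq_zero (hs : IsNilpotent s) (A : GenMatrix R s)
    (h : IsUnit (A.a - A.d)) :
    ∃ β, IsNilpotent (A.d - β) ∧ β ^ 2 - tr A * β + dets A = 0 := by
  set P : R[X] := X ^ 2 - C (tr A) * X + C (dets A)
  have hval : aeval A.d P = -(s * (A.b * A.c)) := by simp [P, tr, dets]; ring
  have hder : aeval A.d (derivative P) = -(A.a - A.d) := by simp [P, tr]; ring
  obtain ⟨β, ⟨hnil, hroot⟩, -⟩ := existsUnique_nilpotent_sub_and_aeval_eq_zero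
    (by rw [hval]; exact (Commute.all _ _).isNilpotent_mul_right hs |>.neg)
    (by rw [hder]; exact h.neg)
  exact ⟨β, hnil, by simpa [P] using hroot⟩

section IsLocalRing

open IsLocalRing

variable [IsLocalRing R]

/-- Reduction of the diagonal modulo the maximal ideal; it is multiplicative because the
off-diagonal contributions to the diagonal of a product are multiples of `s`. -/
noncomputable def diagResidue (hs : s ∈ maximalIdeal R) :
    GenMatrix R s →+* ResidueField R × ResidueField R where
  toFun X := (residue R X.a, residue R X.d)
  map_one' := by simp
  map_mul' X Y := by simp [(residue_eq_zero_iff s).mpr hs]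
  map_zero' := by simp
  map_add' X Y := by simp

theorem diagResidue_apply (hs : s ∈ maximalIdeal R) (X : GenMatrix R s) :
    diagResidue hs X = (residue R X.a, residue R X.d) := rfl

theorem isLocalHom_diagResidue (hs : s ∈ maximalIdeal R) : IsLocalHom (diagResidue hs) := by
  refine ⟨fun A hA => isUnit_of_isUnit_dets ?_⟩
  rw [diagResidue_apply, Prod.isUnit_iff] at hA
  rw [← residue_ne_zero_iff_isUnit]
  simpa [dets, (residue_eq_zero_iff s).mpr hs] using mul_ne_zero hA.1.ne_zero hA.2.ne_zero

theorem exists_idempotent_residue_eq_zero_one (hs : IsNilpotent s) (A : GenMatrix R s)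
    (h : IsUnit (A.a - A.d)) :
    ∃ p : GenMatrix R s, IsIdempotentElem p ∧ p ∈ Set.centralizer (Set.centralizer {A}) ∧
      residue R p.a = 0 ∧ residue R p.d = 1 := by
  obtain ⟨β, hnil, hroot⟩ := exists_isNilpotent_sub_and_charpoly_eq_zero hs A h
  have hβ : residue R β = residue R A.d := by
    have := (residue_eq_zero_iff _).mpr ((mem_maximalIdeal _).mpr hnil.not_isUnit)
    rwa [map_sub, sub_eq_zero, eq_comm] at this
  have hgap : residue R (β - (tr A - β)) ≠ 0 := by
    have hres : residue R (β - (tr A - β)) = -residue R (A.a - A.d) := by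
      simp only [tr, map_sub, map_add, hβ]; ring
    rwa [hres, neg_ne_zero, residue_ne_zero_iff_isUnit]
  obtain ⟨u, hu⟩ := ((residue_ne_zero_iff_isUnit _).mp hgap).exists_left_inv
  refine ⟨u • (A - algebraMap R _ (tr A - β)),
    isIdempotentElem_smul_sub_algebraMap (mul_sub_algebraMap_eq_zero A hroot) hu,
    smul_sub_algebraMap_mem_centralizer_centralizer _ _ _, ?_, ?_⟩
  · simp [tr, hβ]
  · have := congrArg (residue R) hu
    simp only [map_mul, map_sub, map_one, tr, map_add, hβ] at this
    simp only [smul_d, sub_d, add_d, algebraMap_d, tr, map_mul, map_sub, map_add, hβ]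
    linear_combination this

open Classical in
theorem exists_idempotent_residue_eq (hs : IsNilpotent s) (A : GenMatrix R s) :
    ∃ p : GenMatrix R s, IsIdempotentElem p ∧ p ∈ Set.centralizer (Set.centralizer {A}) ∧
      residue R p.a = (if residue R A.a = 0 then 1 else 0) ∧
      residue R p.d = (if residue R A.d = 0 then 1 else 0) := by
  have hgap : residue R A.a ≠ residue R A.d → IsUnit (A.a - A.d) := fun h =>
    (residue_ne_zero_iff_isUnit _).mp (by rwa [map_sub, sub_ne_zero])
  by_cases ha : residue R A.a = 0 <;> by_cases hd : residue R A.d = 0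
  · exact ⟨1, .one, Set.one_mem_centralizer, by simp [ha], by simp [hd]⟩
  · obtain ⟨p, hp, hcomm, hpa, hpd⟩ :=
      exists_idempotent_residue_eq_zero_one hs A (hgap (by rwa [ha, ne_comm]))
    refine ⟨1 - p, hp.one_sub, ?_, by simp [ha, hpa], by simp [hd, hpd]⟩
    exact (Subring.centralizer _).sub_mem (Subring.centralizer _).one_mem hcomm
  · obtain ⟨p, hp, hcomm, hpa, hpd⟩ :=
      exists_idempotent_residue_eq_zero_one hs A (hgap (by rwa [hd]))
    exact ⟨p, hp, hcomm, by simp [ha, hpa], by simp [hd, hpd]⟩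
  · exact ⟨0, .zero, Set.zero_mem_centralizer, by simp [ha], by simp [hd]⟩

end IsLocalRing

end GenMatrix

/-- for a commutative local ring `R`, if `s ∈ R` is nilpotent then `K_s(R)`
is quasipolar. -/
theorem genMatrix_isQuasipolarRing_of_isNilpotent {R : Type*} [CommRing R] [IsLocalRing R]
    (s : R) (hs : IsNilpotent s) :
    IsQuasipolarRing (GenMatrix R s) := by
  intro A
  have hm : s ∈ IsLocalRing.maximalIdeal R :=
    (IsLocalRing.mem_maximalIdeal s).mpr hs.not_isUnit
  have := GenMatrix.isLocalHom_diagResidue hm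
  obtain ⟨p, hp, hcomm, hpa, hpd⟩ := GenMatrix.exists_idempotent_residue_eq hs A
  refine isQuasipolar_of_isLocalHom (GenMatrix.diagResidue hm) hp hcomm ?_ ?_
  · rw [GenMatrix.diagResidue_apply, Prod.isUnit_iff, isUnit_iff_ne_zero, isUnit_iff_ne_zero]
    simp only [GenMatrix.add_a, GenMatrix.add_d, map_add, hpa, hpd]
    constructor <;> split_ifs with h <;> simp [h]
  · rw [GenMatrix.diagResidue_apply, Prod.mk_eq_zero]
    simp only [GenMatrix.mul_a, GenMatrix.mul_d, map_add, map_mul, hpa, hpd,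
      (IsLocalRing.residue_eq_zero_iff s).mpr hm]
    constructor <;> split_ifs with h <;> simp [h]
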